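/- Let f : ℝ → ℝ be infinitely differentiable and z ∈ ℝ. For Δx > 0 set f_m = f(z + (2m−1)Δx/2) for m = −2,…,2 and define L_{2,0}(Δx) = f₋₂ − 2f₋₁ + f₀, L_{2,1}(Δx) = f₋₁ − 2f₀ + f₁, L_{2,2}(Δx) = f₀ − 2f₁ + f₂. Then, as Δx → 0⁺, the combination L_{2,0}(Δx) + L_{2,2}(Δx) − 2·L_{2,1}(Δx) = O(Δx⁴); consequently the global smoothness indicator η(Δx) = ( L_{2,0}(Δx) + L_{2,2}(Δx) − 2·L_{2,1}(Δx) )² satisfies η(Δx) = O(Δx⁸). -/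

import Mathlib

open Filter Asymptotics Topology

/-- Grid value `f_m = f(z + (2m-1)Δx/2)` at the node `x_{j+m}`, where `z` is the
cell interface `x_{j+1/2}`. -/
noncomputable def gridVal (f : ℝ → ℝ) (z Δx : ℝ) (m : ℤ) : ℝ :=
  f (z + (2 * (m : ℝ) - 1) * Δx / 2)

/-- Second-order generalized undivided difference `L_{2,0}f`. -/
noncomputable def L20 (f : ℝ → ℝ) (z Δx : ℝ) : ℝ :=
  gridVal f z Δx (-2) - 2 * gridVal f z Δx (-1) + gridVal f z Δx 0

/-- Second-order generalized undivided difference `L_{2,1}f`. -/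
noncomputable def L21 (f : ℝ → ℝ) (z Δx : ℝ) : ℝ :=
  gridVal f z Δx (-1) - 2 * gridVal f z Δx 0 + gridVal f z Δx 1

/-- Second-order generalized undivided difference `L_{2,2}f`. -/
noncomputable def L22 (f : ℝ → ℝ) (z Δx : ℝ) : ℝ :=
  gridVal f z Δx 0 - 2 * gridVal f z Δx 1 + gridVal f z Δx 2

/-- The `k`-th "level" of the 5-point combination: applying `w = f⁽ᵏ⁾`. -/
noncomputable def Dcomb (w : ℝ → ℝ) (z : ℝ) (k : ℕ) (t : ℝ) : ℝ :=
  (-5/2 : ℝ) ^ k * w (z + (-5/2) * t) - 4 * (-3/2 : ℝ) ^ k * w (z + (-3/2) * t)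
    + 6 * (-1/2 : ℝ) ^ k * w (z + (-1/2) * t) - 4 * (1/2 : ℝ) ^ k * w (z + (1/2) * t)
    + (3/2 : ℝ) ^ k * w (z + (3/2) * t)

lemma Dcomb_hasDerivAt {w w' : ℝ → ℝ} (hw : ∀ x, HasDerivAt w (w' x) x) (z : ℝ) (k : ℕ)
    (t : ℝ) : HasDerivAt (Dcomb w z k) (Dcomb w' z (k + 1) t) t := by
  have h : ∀ c : ℝ, HasDerivAt (fun t : ℝ => w (z + c * t)) (c * w' (z + c * t)) t := by
    intro c
    have h1 : HasDerivAt (fun t : ℝ => z + c * t) c t := by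
      simpa using ((hasDerivAt_id t).const_mul c).const_add z
    have := (hw (z + c * t)).comp t h1
    rw [mul_comm c (w' _)]
    exact this
  have H := (((((h (-5/2)).const_mul ((-5/2:ℝ)^k)).sub
      ((h (-3/2)).const_mul (4 * (-3/2:ℝ)^k))).add
      ((h (-1/2)).const_mul (6 * (-1/2:ℝ)^k))).sub
      ((h (1/2)).const_mul (4 * (1/2:ℝ)^k))).add
      ((h (3/2)).const_mul ((3/2:ℝ)^k))
  convert H using 1
  · rfl
  · rfl
  · funext y; simp only [Dcomb, Pi.add_apply, Pi.sub_apply]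
  unfold Dcomb; ring

lemma stepO {h h' : ℝ → ℝ} {k : ℕ} (hd : ∀ x, HasDerivAt h (h' x) x) (h0 : h 0 = 0)
    (hO : h' =O[𝓝 (0:ℝ)] fun s => s ^ k) : h =O[𝓝 (0:ℝ)] fun s => s ^ (k + 1) := by
  obtain ⟨c, hc0, hc⟩ := hO.exists_nonneg
  rw [isBigOWith_iff] at hc
  rw [Metric.eventually_nhds_iff] at hc
  obtain ⟨ε, hε, hball⟩ := hc
  rw [isBigO_iff]
  refine ⟨c, Metric.eventually_nhds_iff.2 ⟨ε, hε, fun {s} hs => ?_⟩⟩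
  have hseg : ∀ x ∈ segment ℝ (0:ℝ) s, ‖h' x‖ ≤ c * |s| ^ k := by
    intro x hx
    rw [segment_eq_image] at hx
    obtain ⟨θ, hθ, rfl⟩ := hx
    simp only [smul_eq_mul, mul_zero, zero_add, sub_zero]
    have habs : |θ * s| ≤ |s| := by
      rw [abs_mul]
      calc |θ| * |s| ≤ 1 * |s| := by
            apply mul_le_mul_of_nonneg_right _ (abs_nonneg s)
            rw [abs_le]; constructor <;> linarith [hθ.1, hθ.2]
        _ = |s| := one_mul _
    have hmem : dist (θ * s) (0:ℝ) < ε := by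
      rw [Real.dist_eq, sub_zero]
      exact lt_of_le_of_lt habs (by simpa [Real.dist_eq] using hs)
    calc ‖h' (θ * s)‖ ≤ c * ‖(θ * s) ^ k‖ := hball hmem
      _ = c * |θ * s| ^ k := by rw [norm_pow]; rfl
      _ ≤ c * |s| ^ k := by gcongr
  have key := Convex.norm_image_sub_le_of_norm_hasDerivWithin_le
    (f := h) (f' := h') (C := c * |s| ^ k) (s := segment ℝ (0:ℝ) s)
    (fun x hx => (hd x).hasDerivWithinAt) hseg (convex_segment _ _)
    (left_mem_segment ℝ (0:ℝ) s) (right_mem_segment ℝ (0:ℝ) s)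
  rw [h0, sub_zero, sub_zero] at key
  calc ‖h s‖ ≤ c * |s| ^ k * ‖s‖ := key
    _ = c * ‖s ^ (k + 1)‖ := by
        rw [norm_pow, pow_succ, Real.norm_eq_abs]; ring

theorem eta_comb_O4 (f : ℝ → ℝ) (hf : ContDiff ℝ (⊤ : ℕ∞) f) (z : ℝ) :
    (fun t : ℝ => Dcomb f z 0 t) =O[𝓝 (0:ℝ)] fun t => t ^ 4 := by
  -- derivatives of f
  have hD : ∀ n : ℕ, ∀ x : ℝ,
      HasDerivAt (iteratedDeriv n f) (iteratedDeriv (n + 1) f x) x := by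
    intro n x
    have h1 : Differentiable ℝ (iteratedDeriv n f) :=
      hf.differentiable_iteratedDeriv n (by exact_mod_cast lt_top_iff_ne_top.2 (by simp))
    have := (h1 x).hasDerivAt
    rwa [iteratedDeriv_succ]
  -- vanishing at 0
  have hz : ∀ k : ℕ, ∀ w : ℝ → ℝ, k ≤ 3 → Dcomb w z k 0 = 0 := by
    intro k w hk
    interval_cases k <;> (unfold Dcomb; ring_nf)
  -- level 3 is O(t)
  have h3 : (fun t : ℝ => Dcomb (iteratedDeriv 3 f) z 3 t) =O[𝓝 (0:ℝ)] fun t => t ^ 1 := by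
    have hdiff : DifferentiableAt ℝ (Dcomb (iteratedDeriv 3 f) z 3) 0 :=
      (Dcomb_hasDerivAt (hD 3) z 3 0).differentiableAt
    have := hdiff.isBigO_sub
    simpa [hz 3 _ (by norm_num)] using this
  have h2 : (fun t : ℝ => Dcomb (iteratedDeriv 2 f) z 2 t) =O[𝓝 (0:ℝ)] fun t => t ^ 2 :=
    stepO (fun x => Dcomb_hasDerivAt (hD 2) z 2 x) (hz 2 _ (by norm_num)) h3
  have h1 : (fun t : ℝ => Dcomb (iteratedDeriv 1 f) z 1 t) =O[𝓝 (0:ℝ)] fun t => t ^ 3 :=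
    stepO (fun x => Dcomb_hasDerivAt (hD 1) z 1 x) (hz 1 _ (by norm_num)) h2
  have h0 : (fun t : ℝ => Dcomb (iteratedDeriv 0 f) z 0 t) =O[𝓝 (0:ℝ)] fun t => t ^ 4 :=
    stepO (fun x => Dcomb_hasDerivAt (hD 0) z 0 x) (hz 0 _ (by norm_num)) h1
  simpa [iteratedDeriv_zero] using h0


/-- The linear combination `L_{2,0}f + L_{2,2}f - 2L_{2,1}f` is `O(Δx⁴)`, hence the
MWENO-P global smoothness indicator `η = (L_{2,0}f + L_{2,2}f - 2L_{2,1}f)²` is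
`O(Δx⁸)`, as `Δx → 0⁺`. -/
theorem eta_global_indicator_order (f : ℝ → ℝ) (hf : ContDiff ℝ (⊤ : ℕ∞) f) (z : ℝ) :
    ((fun Δx : ℝ => L20 f z Δx + L22 f z Δx - 2 * L21 f z Δx)
        =O[𝓝[>] (0 : ℝ)] fun Δx => Δx ^ 4) ∧
    ((fun Δx : ℝ => (L20 f z Δx + L22 f z Δx - 2 * L21 f z Δx) ^ 2)
        =O[𝓝[>] (0 : ℝ)] fun Δx => Δx ^ 8) := by
  have heq : (fun Δx : ℝ => L20 f z Δx + L22 f z Δx - 2 * L21 f z Δx)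
      = fun Δx : ℝ => Dcomb f z 0 Δx := by
    funext Δx
    simp only [L20, L21, L22, gridVal, Dcomb]
    push_cast
    ring_nf
  have h4 : (fun Δx : ℝ => L20 f z Δx + L22 f z Δx - 2 * L21 f z Δx)
      =O[𝓝[>] (0 : ℝ)] fun Δx => Δx ^ 4 := by
    rw [heq]
    exact (eta_comb_O4 f hf z).mono nhdsWithin_le_nhds
  refine ⟨h4, ?_⟩
  have := h4.mul h4
  simpa [← sq, ← pow_mul] using this
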